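/- Suppose max_{|z|≤2πδ}[α|U(z)|²] ≤ α·a² and 2πδκ·(max_{|z|≤2πδ}|1 − ε^{(L)}(z)| + α a²) < cos φ. Then the affine map Φ ↦ U^{inc} − KΦ, where (KΦ)(z) = (iκ²/(2Γ))∫_{−2πδ}^{2πδ} e^{iΓ|z−z₀|}[1 − (ε^{(L)}(z₀) + α|U(z₀)|²)]Φ(z₀)dz₀ and Γ = κcosφ, is a contraction on L²([−2πδ, 2πδ]) and hence has a unique fixed point. -/

import Mathlib

/-- The integral operator `(KΦ)(z) = (iκ²/(2Γ))∫ e^{iΓ|z−z₀|}[1 − (ε^{(L)}(z₀) + α|U(z₀)|²)]Φ(z₀)dz₀`. -/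
noncomputable def Kop (δ κ α Γ : ℝ) (εL : ℝ → ℂ) (U Φ : ℝ → ℂ) (z : ℝ) : ℂ :=
  (Complex.I * κ ^ 2 / (2 * Γ)) *
    ∫ z₀ in (-(2 * Real.pi * δ))..(2 * Real.pi * δ),
      Complex.exp (Complex.I * Γ * |z - z₀|) *
        (1 - (εL z₀ + ((α * ‖U z₀‖ ^ 2 : ℝ) : ℂ))) * Φ z₀


/-!
Every kernel value of `K` has modulus at most `k := κ² / (2Γ) · (M + α a²)`, so
`|KΦ(z)| ≤ k ‖Φ‖₁ ≤ k √(4πδ) ‖Φ‖₂` by Cauchy–Schwarz, and integrating the square over an interval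
of length `4πδ` gives `‖KΦ‖₂ ≤ 4πδ k ‖Φ‖₂`; with `Γ = κ cos φ` the constant `4πδ k` equals
`2πδκ(M + α a²) / cos φ < 1`. Since also `‖Φ‖₁ ≤ 4πδ ‖Φ‖∞`, the same constant makes the affine map
a sup-norm contraction of `C([-2πδ, 2πδ], ℂ)`, and Banach's fixed point theorem gives the unique
continuous fixed point.
-/

open MeasureTheory Set
open scoped NNReal

section IntervalEstimates

variable {a b : ℝ}

theorem sq_intervalIntegral_le_mul_intervalIntegral_sq (hab : a ≤ b) {f : ℝ → ℝ}
    (hf : IntervalIntegrable f volume a b)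
    (hf2 : IntervalIntegrable (fun x => f x ^ 2) volume a b) :
    (∫ x in a..b, f x) ^ 2 ≤ (b - a) * ∫ x in a..b, f x ^ 2 := by
  rcases hab.eq_or_lt with rfl | hlt
  · simp
  set I := ∫ x in a..b, f x
  set c := I / (b - a)
  have hvariance : 0 ≤ ∫ x in a..b, (f x - c) ^ 2 :=
    intervalIntegral.integral_nonneg hab fun x _ => sq_nonneg _
  have hexpand : ∫ x in a..b, (f x - c) ^ 2 =
      (∫ x in a..b, f x ^ 2) - 2 * c * I + c ^ 2 * (b - a) := by
    simp_rw [sub_sq, mul_right_comm 2 (f _) c, mul_comm _ c]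
    rw [intervalIntegral.integral_add (hf2.sub (hf.const_mul _)) intervalIntegrable_const,
      intervalIntegral.integral_sub hf2 (hf.const_mul _), intervalIntegral.integral_const_mul,
      intervalIntegral.integral_const, smul_eq_mul]
    ring
  have hba : 0 < b - a := sub_pos.2 hlt
  have hc : 2 * c * I - c ^ 2 * (b - a) = I ^ 2 / (b - a) := by
    simp only [c]; field_simp; ring
  rw [hexpand, sub_add, hc, sub_nonneg, div_le_iff₀ hba] at hvariance
  linarith

variable {E : Type*} [NormedAddCommGroup E]

theorem intervalIntegral_norm_le_sqrt_mul_sqrt (hab : a ≤ b) {f : ℝ → E}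
    (hf : ContinuousOn f (Icc a b)) :
    ∫ x in a..b, ‖f x‖ ≤ √(b - a) * √(∫ x in a..b, ‖f x‖ ^ 2) := by
  rw [← uIcc_of_le hab] at hf
  rw [← Real.sqrt_mul (sub_nonneg.2 hab),
    ← Real.sqrt_sq (intervalIntegral.integral_nonneg hab fun x _ => norm_nonneg (f x))]
  exact Real.sqrt_le_sqrt (sq_intervalIntegral_le_mul_intervalIntegral_sq hab
    hf.norm.intervalIntegrable (hf.norm.pow 2).intervalIntegrable)

theorem sqrt_intervalIntegral_norm_sq_le (hab : a ≤ b) {g : ℝ → E} {C : ℝ}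
    (hg : ∀ x ∈ Icc a b, ‖g x‖ ≤ C) :
    √(∫ x in a..b, ‖g x‖ ^ 2) ≤ √(b - a) * C := by
  have hC : 0 ≤ C := (norm_nonneg _).trans (hg a (left_mem_Icc.2 hab))
  have hint : ∫ x in a..b, ‖g x‖ ^ 2 ≤ C ^ 2 * (b - a) := by
    have hbound : ∀ x ∈ uIoc a b, ‖‖g x‖ ^ 2‖ ≤ C ^ 2 := fun x hx => by
      rw [uIoc_of_le hab] at hx
      rw [Real.norm_of_nonneg (by positivity)]
      exact pow_le_pow_left₀ (norm_nonneg _) (hg x (Ioc_subset_Icc_self hx)) 2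
    simpa only [abs_of_nonneg (sub_nonneg.2 hab)] using
      (Real.le_norm_self _).trans (intervalIntegral.norm_integral_le_of_norm_le_const hbound)
  calc √(∫ x in a..b, ‖g x‖ ^ 2) ≤ √(C ^ 2 * (b - a)) := Real.sqrt_le_sqrt hint
    _ = √(b - a) * C := by rw [Real.sqrt_mul (sq_nonneg C), Real.sqrt_sq hC, mul_comm]

end IntervalEstimates

theorem exists_continuousOn_fixed_Icc_of_contracting {E : Type*} [NormedAddCommGroup E]
    [CompleteSpace E] {a b : ℝ} (hab : a ≤ b) (F : (ℝ → E) → ℝ → E) {K : ℝ≥0} (hK : K < 1)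
    (hF_cont : ∀ Φ, Continuous Φ → ContinuousOn (F Φ) (Icc a b))
    (hF_congr : ∀ Φ Ψ, EqOn Φ Ψ (Icc a b) → EqOn (F Φ) (F Ψ) (Icc a b))
    (hF_lip : ∀ Φ Ψ C, Continuous Φ → Continuous Ψ → (∀ x ∈ Icc a b, ‖Φ x - Ψ x‖ ≤ C) →
      ∀ x ∈ Icc a b, ‖F Φ x - F Ψ x‖ ≤ K * C) :
    ∃ Φ, ContinuousOn Φ (Icc a b) ∧ EqOn Φ (F Φ) (Icc a b) ∧
      ∀ Ψ, ContinuousOn Ψ (Icc a b) → EqOn Ψ (F Ψ) (Icc a b) → EqOn Ψ Φ (Icc a b) := by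
  let ext : C(Icc a b, E) → ℝ → E := fun f => IccExtend hab f
  have ext_cont (f) : Continuous (ext f) := f.continuous.comp continuous_projIcc
  let T : C(Icc a b, E) → C(Icc a b, E) := fun f => ⟨_, (hF_cont _ (ext_cont f)).domRestrict⟩
  have hT : ContractingWith K T := by
    refine ⟨hK, LipschitzWith.of_dist_le_mul fun f g => ?_⟩
    refine (ContinuousMap.dist_le (mul_nonneg K.2 dist_nonneg)).2 fun x => ?_
    refine (dist_eq_norm (T f x) (T g x)).trans_le
      (hF_lip _ _ _ (ext_cont f) (ext_cont g) (fun y hy => ?_) x x.2)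
    simpa only [← dist_eq_norm, ext, IccExtend_of_mem hab _ hy] using
      ContinuousMap.dist_apply_le_dist (f := f) (g := g) ⟨y, hy⟩
  have ext_apply {f : C(Icc a b, E)} {x} (hx : x ∈ Icc a b) : ext f x = f ⟨x, hx⟩ :=
    IccExtend_of_mem hab f hx
  obtain ⟨Φ₀, hΦ₀, hunique⟩ : ∃ Φ₀, T Φ₀ = Φ₀ ∧ ∀ f, T f = f → f = Φ₀ :=
    ⟨_, hT.fixedPoint_isFixedPt, fun _ hf => hT.fixedPoint_unique hf⟩
  refine ⟨ext Φ₀, (ext_cont _).continuousOn, fun x hx => ?_, fun Ψ hΨ hfix x hx => ?_⟩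
  · exact (ext_apply hx).trans (congrArg (· ⟨x, hx⟩) hΦ₀.symm)
  · let f : C(Icc a b, E) := ⟨_, hΨ.domRestrict⟩
    have hf : EqOn (ext f) Ψ (Icc a b) := fun y hy => ext_apply hy
    have hTf : T f = f := by
      ext ⟨y, hy⟩
      exact (hF_congr _ _ hf hy).trans (hfix hy).symm
    rw [ext_apply hx, ← hunique f hTf]
    rfl

section Kop

variable {δ κ α Γ : ℝ} {εL U : ℝ → ℂ}

theorem norm_Kop_le (hδ : 0 ≤ δ) (hα : 0 ≤ α) {a M : ℝ}
    (hUa : ∀ z ∈ Icc (-(2 * Real.pi * δ)) (2 * Real.pi * δ), ‖U z‖ ≤ a)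
    (hM : ∀ z ∈ Icc (-(2 * Real.pi * δ)) (2 * Real.pi * δ), ‖1 - εL z‖ ≤ M)
    {Ψ : ℝ → ℂ} (hΨ : IntervalIntegrable Ψ volume (-(2 * Real.pi * δ)) (2 * Real.pi * δ))
    (z : ℝ) :
    ‖Kop δ κ α Γ εL U Ψ z‖ ≤
      κ ^ 2 / (2 * |Γ|) * (M + α * a ^ 2) *
        ∫ z₀ in (-(2 * Real.pi * δ))..(2 * Real.pi * δ), ‖Ψ z₀‖ := by
  have hle : -(2 * Real.pi * δ) ≤ 2 * Real.pi * δ := neg_le_self (by positivity)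
  have hcoeff : ‖Complex.I * (κ : ℂ) ^ 2 / (2 * Γ)‖ = κ ^ 2 / (2 * |Γ|) := by
    simp [Complex.norm_real]
  have hweight : ∀ z₀ ∈ Icc (-(2 * Real.pi * δ)) (2 * Real.pi * δ),
      ‖1 - (εL z₀ + ((α * ‖U z₀‖ ^ 2 : ℝ) : ℂ))‖ ≤ M + α * a ^ 2 := fun z₀ hz₀ => by
    calc ‖1 - (εL z₀ + ((α * ‖U z₀‖ ^ 2 : ℝ) : ℂ))‖
        = ‖(1 - εL z₀) - ((α * ‖U z₀‖ ^ 2 : ℝ) : ℂ)‖ := by rw [sub_add_eq_sub_sub]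
      _ ≤ ‖1 - εL z₀‖ + α * ‖U z₀‖ ^ 2 := by
        refine (norm_sub_le _ _).trans_eq ?_
        rw [Complex.norm_real, Real.norm_of_nonneg (by positivity)]
      _ ≤ M + α * a ^ 2 := by
        gcongr
        exacts [hM z₀ hz₀, hUa z₀ hz₀]
  rw [Kop, norm_mul, hcoeff, mul_assoc (κ ^ 2 / (2 * |Γ|)), ← intervalIntegral.integral_const_mul]
  gcongr
  refine intervalIntegral.norm_integral_le_of_norm_le hle (ae_of_all _ fun z₀ hz₀ => ?_)
    (hΨ.norm.const_mul _)
  have hphase : ‖Complex.exp (Complex.I * Γ * |z - z₀|)‖ = 1 := by simp [Complex.norm_exp]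
  rw [norm_mul, norm_mul, hphase, one_mul]
  exact mul_le_mul_of_nonneg_right (hweight z₀ (Ioc_subset_Icc_self hz₀)) (norm_nonneg _)

theorem Kop_sub (hεL : Continuous εL) (hU : Continuous U) {Φ₁ Φ₂ : ℝ → ℂ}
    (h₁ : IntervalIntegrable Φ₁ volume (-(2 * Real.pi * δ)) (2 * Real.pi * δ))
    (h₂ : IntervalIntegrable Φ₂ volume (-(2 * Real.pi * δ)) (2 * Real.pi * δ)) (z : ℝ) :
    Kop δ κ α Γ εL U Φ₁ z - Kop δ κ α Γ εL U Φ₂ z = Kop δ κ α Γ εL U (Φ₁ - Φ₂) z := by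
  have hkernel : Continuous fun z₀ : ℝ =>
      Complex.exp (Complex.I * Γ * |z - z₀|) * (1 - (εL z₀ + ((α * ‖U z₀‖ ^ 2 : ℝ) : ℂ))) := by
    fun_prop
  simp only [Kop, Pi.sub_apply, mul_sub _ (Φ₁ _)]
  rw [intervalIntegral.integral_sub (h₁.continuousOn_mul hkernel.continuousOn)
    (h₂.continuousOn_mul hkernel.continuousOn), mul_sub]

theorem continuous_Kop (hεL : Continuous εL) (hU : Continuous U) {Ψ : ℝ → ℂ}
    (hΨ : Continuous Ψ) : Continuous (Kop δ κ α Γ εL U Ψ) := by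
  unfold Kop
  fun_prop

theorem Kop_congr (hδ : 0 ≤ δ) {Φ Ψ : ℝ → ℂ}
    (h : EqOn Φ Ψ (Icc (-(2 * Real.pi * δ)) (2 * Real.pi * δ))) :
    Kop δ κ α Γ εL U Φ = Kop δ κ α Γ εL U Ψ := by
  have hle : -(2 * Real.pi * δ) ≤ 2 * Real.pi * δ := neg_le_self (by positivity)
  ext z
  unfold Kop
  congr 1
  refine intervalIntegral.integral_congr fun z₀ hz₀ => ?_
  rw [uIcc_of_le hle] at hz₀
  simp only [h hz₀]

theorem norm_Kop_sub_le (hδ : 0 ≤ δ) (hα : 0 ≤ α) (hεL : Continuous εL) (hU : Continuous U)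
    {a M : ℝ} (hUa : ∀ z ∈ Icc (-(2 * Real.pi * δ)) (2 * Real.pi * δ), ‖U z‖ ≤ a)
    (hM : ∀ z ∈ Icc (-(2 * Real.pi * δ)) (2 * Real.pi * δ), ‖1 - εL z‖ ≤ M) {Φ₁ Φ₂ : ℝ → ℂ}
    (h₁ : IntervalIntegrable Φ₁ volume (-(2 * Real.pi * δ)) (2 * Real.pi * δ))
    (h₂ : IntervalIntegrable Φ₂ volume (-(2 * Real.pi * δ)) (2 * Real.pi * δ)) (z : ℝ) :
    ‖Kop δ κ α Γ εL U Φ₁ z - Kop δ κ α Γ εL U Φ₂ z‖ ≤ κ ^ 2 / (2 * |Γ|) * (M + α * a ^ 2) *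
      ∫ z₀ in (-(2 * Real.pi * δ))..(2 * Real.pi * δ), ‖Φ₁ z₀ - Φ₂ z₀‖ := by
  rw [Kop_sub hεL hU h₁ h₂]
  exact norm_Kop_le hδ hα hUa hM (h₁.sub h₂) z

theorem sqrt_integral_norm_Kop_sub_sq_le (hδ : 0 ≤ δ) (hα : 0 ≤ α) (hεL : Continuous εL)
    (hU : Continuous U) {a M : ℝ}
    (hUa : ∀ z ∈ Icc (-(2 * Real.pi * δ)) (2 * Real.pi * δ), ‖U z‖ ≤ a)
    (hM : ∀ z ∈ Icc (-(2 * Real.pi * δ)) (2 * Real.pi * δ), ‖1 - εL z‖ ≤ M) {Φ₁ Φ₂ : ℝ → ℂ}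
    (h₁ : ContinuousOn Φ₁ (Icc (-(2 * Real.pi * δ)) (2 * Real.pi * δ)))
    (h₂ : ContinuousOn Φ₂ (Icc (-(2 * Real.pi * δ)) (2 * Real.pi * δ))) :
    √(∫ z in (-(2 * Real.pi * δ))..(2 * Real.pi * δ),
        ‖Kop δ κ α Γ εL U Φ₁ z - Kop δ κ α Γ εL U Φ₂ z‖ ^ 2) ≤
      κ ^ 2 / (2 * |Γ|) * (M + α * a ^ 2) * (4 * Real.pi * δ) *
        √(∫ z in (-(2 * Real.pi * δ))..(2 * Real.pi * δ), ‖Φ₁ z - Φ₂ z‖ ^ 2) := by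
  have hle : -(2 * Real.pi * δ) ≤ 2 * Real.pi * δ := neg_le_self (by positivity)
  have hlen : 2 * Real.pi * δ - -(2 * Real.pi * δ) = 4 * Real.pi * δ := by ring
  set K := κ ^ 2 / (2 * |Γ|) * (M + α * a ^ 2)
  have hK : 0 ≤ K := by
    have := (norm_nonneg _).trans (hM _ (left_mem_Icc.2 hle))
    positivity
  set L2 := √(∫ z in (-(2 * Real.pi * δ))..(2 * Real.pi * δ), ‖Φ₁ z - Φ₂ z‖ ^ 2)
  have hpointwise (z : ℝ) :
      ‖Kop δ κ α Γ εL U Φ₁ z - Kop δ κ α Γ εL U Φ₂ z‖ ≤ K * (√(4 * Real.pi * δ) * L2) := by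
    rw [← hlen]
    refine (norm_Kop_sub_le hδ hα hεL hU hUa hM ?_ ?_ z).trans
      (mul_le_mul_of_nonneg_left (intervalIntegral_norm_le_sqrt_mul_sqrt hle (h₁.sub h₂)) hK)
    exacts [(uIcc_of_le hle ▸ h₁).intervalIntegrable, (uIcc_of_le hle ▸ h₂).intervalIntegrable]
  refine (sqrt_intervalIntegral_norm_sq_le hle fun z _ => hpointwise z).trans_eq ?_
  rw [hlen]
  linear_combination K * L2 * Real.mul_self_sqrt (by positivity : 0 ≤ 4 * Real.pi * δ)

theorem norm_Kop_sub_le_of_norm_sub_le (hδ : 0 ≤ δ) (hα : 0 ≤ α) (hεL : Continuous εL)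
    (hU : Continuous U) {a M : ℝ}
    (hUa : ∀ z ∈ Icc (-(2 * Real.pi * δ)) (2 * Real.pi * δ), ‖U z‖ ≤ a)
    (hM : ∀ z ∈ Icc (-(2 * Real.pi * δ)) (2 * Real.pi * δ), ‖1 - εL z‖ ≤ M) {Φ₁ Φ₂ : ℝ → ℂ}
    (h₁ : Continuous Φ₁) (h₂ : Continuous Φ₂) {C : ℝ}
    (hC : ∀ z ∈ Icc (-(2 * Real.pi * δ)) (2 * Real.pi * δ), ‖Φ₁ z - Φ₂ z‖ ≤ C) (z : ℝ) :
    ‖Kop δ κ α Γ εL U Φ₁ z - Kop δ κ α Γ εL U Φ₂ z‖ ≤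
      κ ^ 2 / (2 * |Γ|) * (M + α * a ^ 2) * (4 * Real.pi * δ) * C := by
  have hle : -(2 * Real.pi * δ) ≤ 2 * Real.pi * δ := neg_le_self (by positivity)
  have hK : 0 ≤ κ ^ 2 / (2 * |Γ|) * (M + α * a ^ 2) := by
    have := (norm_nonneg _).trans (hM _ (left_mem_Icc.2 hle))
    positivity
  have hL1 : ∫ z₀ in (-(2 * Real.pi * δ))..(2 * Real.pi * δ), ‖Φ₁ z₀ - Φ₂ z₀‖ ≤
      4 * Real.pi * δ * C := by
    refine (intervalIntegral.integral_mono_on hle ((h₁.sub h₂).norm.intervalIntegrable _ _)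
      intervalIntegrable_const hC).trans_eq ?_
    rw [intervalIntegral.integral_const, smul_eq_mul]
    ring
  rw [mul_assoc _ (4 * Real.pi * δ)]
  exact (norm_Kop_sub_le hδ hα hεL hU hUa hM (h₁.intervalIntegrable _ _)
    (h₂.intervalIntegrable _ _) z).trans (mul_le_mul_of_nonneg_left hL1 hK)

end Kop

theorem stmt_16_general (δ κ α a φ : ℝ) (hδ : 0 < δ) (hκ : 0 < κ) (hα : 0 < α)
    (Γ : ℝ) (hΓ : Γ = κ * Real.cos φ)
    (εL : ℝ → ℂ) (hεL : Continuous εL)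
    (U : ℝ → ℂ) (hU : Continuous U)
    (hUa : ∀ z ∈ Set.Icc (-(2 * Real.pi * δ)) (2 * Real.pi * δ), ‖U z‖ ≤ a)
    (M : ℝ)
    (hM : ∀ z ∈ Set.Icc (-(2 * Real.pi * δ)) (2 * Real.pi * δ), ‖1 - εL z‖ ≤ M)
    (hcond : 2 * Real.pi * δ * κ * (M + α * a ^ 2) < Real.cos φ) :
    (∃ t : ℝ, 0 ≤ t ∧ t < 1 ∧
      ∀ Φ₁ Φ₂ : ℝ → ℂ,
        ContinuousOn Φ₁ (Set.Icc (-(2 * Real.pi * δ)) (2 * Real.pi * δ)) →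
        ContinuousOn Φ₂ (Set.Icc (-(2 * Real.pi * δ)) (2 * Real.pi * δ)) →
        Real.sqrt (∫ z in (-(2 * Real.pi * δ))..(2 * Real.pi * δ),
            ‖(a * Complex.exp (-Complex.I * Γ * (z - 2 * Real.pi * δ)) -
                Kop δ κ α Γ εL U Φ₁ z) -
              (a * Complex.exp (-Complex.I * Γ * (z - 2 * Real.pi * δ)) -
                Kop δ κ α Γ εL U Φ₂ z)‖ ^ 2) ≤
          t * Real.sqrt (∫ z in (-(2 * Real.pi * δ))..(2 * Real.pi * δ),
            ‖Φ₁ z - Φ₂ z‖ ^ 2)) ∧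
    (∃ Φ : ℝ → ℂ, ContinuousOn Φ (Set.Icc (-(2 * Real.pi * δ)) (2 * Real.pi * δ)) ∧
      (∀ z ∈ Set.Icc (-(2 * Real.pi * δ)) (2 * Real.pi * δ),
        Φ z = a * Complex.exp (-Complex.I * Γ * (z - 2 * Real.pi * δ)) -
          Kop δ κ α Γ εL U Φ z) ∧
      ∀ Ψ : ℝ → ℂ, ContinuousOn Ψ (Set.Icc (-(2 * Real.pi * δ)) (2 * Real.pi * δ)) →
        (∀ z ∈ Set.Icc (-(2 * Real.pi * δ)) (2 * Real.pi * δ),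
          Ψ z = a * Complex.exp (-Complex.I * Γ * (z - 2 * Real.pi * δ)) -
            Kop δ κ α Γ εL U Ψ z) →
        ∀ z ∈ Set.Icc (-(2 * Real.pi * δ)) (2 * Real.pi * δ), Ψ z = Φ z) := by
  have hM0 : 0 ≤ M := (norm_nonneg _).trans (hM 0 ⟨neg_nonpos.2 (by positivity), by positivity⟩)
  have hcos : 0 < Real.cos φ := lt_of_le_of_lt (by positivity) hcond
  set t := κ ^ 2 / (2 * |Γ|) * (M + α * a ^ 2) * (4 * Real.pi * δ) with ht
  have ht0 : 0 ≤ t := by positivity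
  have ht1 : t < 1 := by
    have : t = 2 * Real.pi * δ * κ * (M + α * a ^ 2) / Real.cos φ := by
      rw [ht, hΓ, abs_of_pos (mul_pos hκ hcos)]
      field_simp
      ring
    rwa [this, div_lt_one hcos]
  refine ⟨⟨t, ht0, ht1, fun Φ₁ Φ₂ h₁ h₂ => ?_⟩, ?_⟩
  · simp_rw [sub_sub_sub_cancel_left, norm_sub_rev (Kop δ κ α Γ εL U Φ₂ _)]
    exact sqrt_integral_norm_Kop_sub_sq_le hδ.le hα.le hεL hU hUa hM h₁ h₂
  · refine exists_continuousOn_fixed_Icc_of_contracting (neg_le_self (by positivity))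
      (fun Φ z => a * Complex.exp (-Complex.I * Γ * (z - 2 * Real.pi * δ)) - Kop δ κ α Γ εL U Φ z)
      (K := ⟨t, ht0⟩) ht1
      (fun Φ hΦ => (Continuous.sub (by fun_prop) (continuous_Kop hεL hU hΦ)).continuousOn)
      (fun Φ Ψ h z _ => by simp only [Kop_congr hδ.le h])
      (fun Φ Ψ C hΦ hΨ hC z _ => ?_)
    rw [sub_sub_sub_cancel_left, norm_sub_rev]
    exact norm_Kop_sub_le_of_norm_sub_le hδ.le hα.le hεL hU hUa hM hΦ hΨ hC z

/-- Under the weak-nonlinearity smallness condition (59), the affine map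
`Φ ↦ U^{inc} − KΦ` is a contraction in the `L²` norm on `[−2πδ, 2πδ]` and has a
unique fixed point. -/
theorem stmt_16 (δ κ α a φ : ℝ) (hδ : 0 < δ) (hκ : 0 < κ) (hα : 0 < α) (ha : 0 < a)
    (hφ : |φ| < Real.pi / 2) (Γ : ℝ) (hΓ : Γ = κ * Real.cos φ)
    (εL : ℝ → ℂ) (hεL : Continuous εL)
    (U : ℝ → ℂ) (hU : Continuous U)
    (hUa : ∀ z ∈ Set.Icc (-(2 * Real.pi * δ)) (2 * Real.pi * δ), ‖U z‖ ≤ a)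
    (M : ℝ)
    (hM : ∀ z ∈ Set.Icc (-(2 * Real.pi * δ)) (2 * Real.pi * δ), ‖1 - εL z‖ ≤ M)
    (hcond : 2 * Real.pi * δ * κ * (M + α * a ^ 2) < Real.cos φ) :
    (∃ t : ℝ, 0 ≤ t ∧ t < 1 ∧
      ∀ Φ₁ Φ₂ : ℝ → ℂ,
        ContinuousOn Φ₁ (Set.Icc (-(2 * Real.pi * δ)) (2 * Real.pi * δ)) →
        ContinuousOn Φ₂ (Set.Icc (-(2 * Real.pi * δ)) (2 * Real.pi * δ)) →
        Real.sqrt (∫ z in (-(2 * Real.pi * δ))..(2 * Real.pi * δ),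
            ‖(a * Complex.exp (-Complex.I * Γ * (z - 2 * Real.pi * δ)) -
                Kop δ κ α Γ εL U Φ₁ z) -
              (a * Complex.exp (-Complex.I * Γ * (z - 2 * Real.pi * δ)) -
                Kop δ κ α Γ εL U Φ₂ z)‖ ^ 2) ≤
          t * Real.sqrt (∫ z in (-(2 * Real.pi * δ))..(2 * Real.pi * δ),
            ‖Φ₁ z - Φ₂ z‖ ^ 2)) ∧
    (∃ Φ : ℝ → ℂ, ContinuousOn Φ (Set.Icc (-(2 * Real.pi * δ)) (2 * Real.pi * δ)) ∧
      (∀ z ∈ Set.Icc (-(2 * Real.pi * δ)) (2 * Real.pi * δ),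
        Φ z = a * Complex.exp (-Complex.I * Γ * (z - 2 * Real.pi * δ)) -
          Kop δ κ α Γ εL U Φ z) ∧
      ∀ Ψ : ℝ → ℂ, ContinuousOn Ψ (Set.Icc (-(2 * Real.pi * δ)) (2 * Real.pi * δ)) →
        (∀ z ∈ Set.Icc (-(2 * Real.pi * δ)) (2 * Real.pi * δ),
          Ψ z = a * Complex.exp (-Complex.I * Γ * (z - 2 * Real.pi * δ)) -
            Kop δ κ α Γ εL U Ψ z) →
        ∀ z ∈ Set.Icc (-(2 * Real.pi * δ)) (2 * Real.pi * δ), Ψ z = Φ z) :=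
  stmt_16_general δ κ α a φ hδ hκ hα Γ hΓ εL hεL U hU hUa M hM hcond
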